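/- arXiv:2205.04882 — 2 statements merged into one kernel-verified Lean document; each statement's English description precedes it below -/
import Mathlib

section
/- Let P be a normal logic program and M a model of P in the four-valued logic. Define the two-valued interpretation M' by M'(A) = T if M(A) ≥ T*, and M'(A) = F otherwise. Then M' is a model of P. -/
/-- The four truth values F < F* < T* < T. -/
inductive V where
  | F | Fs | Ts | T
  deriving DecidableEq, Repr

def V.toNat : V → ℕ
  | .F => 0
  | .Fs => 1
  | .Ts => 2
  | .T => 3

instance : LinearOrder V :=
  LinearOrder.lift' V.toNat (by intro a b; cases a <;> cases b <;> simp [V.toNat])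

/-- An LPOD rule `hd × hds(1) × ⋯ × hds(k) ← pos(1) ∧ ⋯ ∧ not neg(1) ∧ ⋯`. -/
structure Rule where
  hd : ℕ
  hds : List ℕ
  pos : List ℕ
  neg : List ℕ
  deriving DecidableEq, Repr

/-- Value of an ordered disjunction `c × cs(1) × ⋯ × cs(k)` of atoms. -/
def evalHead (I : ℕ → V) : ℕ → List ℕ → V
  | c, [] => I c
  | c, c' :: cs => if I c = V.Fs then evalHead I c' cs else I c

/-- Value of `not φ` given the value of `φ`. -/
def evalNot (v : V) : V := if v ≤ V.Fs then V.T else V.F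

/-- Value of the body of a rule (the empty body evaluates to `T`). -/
def evalBody (I : ℕ → V) (r : Rule) : V :=
  ((r.pos.map I) ++ (r.neg.map (fun b => evalNot (I b)))).foldr min V.T

/-- A rule evaluates to `T` under `I` (i.e. `I(head) ≥ I(body)`). -/
def Rule.sat (I : ℕ → V) (r : Rule) : Prop :=
  evalBody I r ≤ evalHead I r.hd r.hds

/-- An LPOD: a finite set of rules. -/
abbrev Program := Finset Rule

def isModel (I : ℕ → V) (P : Program) : Prop := ∀ r ∈ P, r.sat I

/-- Logical equivalence in the four-valued logic: same models. -/
def logEquiv (P1 P2 : Program) : Prop := ∀ I : ℕ → V, isModel I P1 ↔ isModel I P2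

def Rule.atoms (r : Rule) : Finset ℕ :=
  {r.hd} ∪ r.hds.toFinset ∪ r.pos.toFinset ∪ r.neg.toFinset

/-- The atoms occurring in a program. -/
def progAtoms (P : Program) : Finset ℕ := P.biUnion Rule.atoms

/-- The ordering `⪯` on truth values: reflexive closure of
    `F ≺ F*`, `F ≺ T*`, `F ≺ T`, `T* ≺ T`. -/
def V.pre (v1 v2 : V) : Prop :=
  v1 = v2 ∨ (v1 = V.F ∧ v2 ≠ V.F) ∨ (v1 = V.Ts ∧ v2 = V.T)

/-- `I1 ⪯ I2` relative to the atoms of `P`. -/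
def interpLe (P : Program) (I1 I2 : ℕ → V) : Prop :=
  ∀ A ∈ progAtoms P, V.pre (I1 A) (I2 A)

/-- `I` is solid for `P`: no atom of `P` gets the value `T*`. -/
def solid (P : Program) (I : ℕ → V) : Prop :=
  ∀ A ∈ progAtoms P, I A ≠ V.Ts

/-- An answer set of `P`: a `⪯`-minimal model of `P` that is solid. -/
def answerSet (P : Program) (M : ℕ → V) : Prop :=
  isModel M P ∧ solid P M ∧
    ∀ N : ℕ → V, isModel N P → interpLe P N M → interpLe P M N

/-- The atoms of `P` receiving the value `F*` under `M`. -/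
def fstars (P : Program) (M : ℕ → V) : Finset ℕ :=
  (progAtoms P).filter (fun A => M A = V.Fs)

/-- A most-preferred answer set: `⊏`-minimal among the answer sets. -/
def mostPreferred (P : Program) (M : ℕ → V) : Prop :=
  answerSet P M ∧ ∀ N : ℕ → V, answerSet P N → ¬ fstars P N ⊂ fstars P M

/-- Strong equivalence under the most-preferred answer sets. -/
def seMost (P1 P2 : Program) : Prop :=
  ∀ P : Program, ∀ M : ℕ → V, mostPreferred (P1 ∪ P) M ↔ mostPreferred (P2 ∪ P) M

/-- Strong equivalence under all the answer sets. -/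
def seAll (P1 P2 : Program) : Prop :=
  ∀ P : Program, ∀ M : ℕ → V, answerSet (P1 ∪ P) M ↔ answerSet (P2 ∪ P) M

/-- A normal logic program: every rule has a single atom as head. -/
def normalProg (P : Program) : Prop := ∀ r ∈ P, r.hds = []

/-- `X` is closed under the rules of the Gelfond–Lifschitz reduct `P^S`. -/
def reductClosed (P : Program) (S X : Set ℕ) : Prop :=
  ∀ r ∈ P, (∀ b ∈ r.neg, b ∉ S) → (∀ a ∈ r.pos, a ∈ X) → r.hd ∈ X

/-- `S` is a stable model (standard answer set): the least Herbrand model of `P^S`. -/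
def stableModel (P : Program) (S : Set ℕ) : Prop :=
  reductClosed P S S ∧ ∀ X : Set ℕ, reductClosed P S X → S ⊆ X

/-- `I` is three-valued for `P`: no atom of `P` gets the value `F*`. -/
def threeValued (P : Program) (I : ℕ → V) : Prop :=
  ∀ A ∈ progAtoms P, I A ≠ V.Fs


lemma foldr_min_le {l : List V} {v : V} (hv : v < V.T)
    (h : l.foldr min V.T ≤ v) : ∃ x ∈ l, x ≤ v := by
  induction l with
  | nil => exact absurd h (not_le.mpr hv)
  | cons a t ih =>
    simp only [List.foldr_cons, min_le_iff] at h
    rcases h with h | h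
    · exact ⟨a, List.mem_cons_self, h⟩
    · obtain ⟨x, hx, hxv⟩ := ih h
      exact ⟨x, List.mem_cons_of_mem a hx, hxv⟩

lemma foldr_min_le_mem {l : List V} {x : V} (hx : x ∈ l) :
    l.foldr min V.T ≤ x := by
  induction l with
  | nil => cases hx
  | cons a t ih =>
    simp only [List.foldr_cons]
    rcases List.mem_cons.mp hx with rfl | hx
    · exact min_le_left _ _
    · exact le_trans (min_le_right _ _) (ih hx)

/-- collapsing a four-valued model of a normal program to the
two-valued interpretation (`T` iff the value is `≥ T*`) yields a model. -/
theorem twoValued_collapse_isModel (P : Program) (hP : normalProg P)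
    (M : ℕ → V) (h : isModel M P) :
    isModel (fun A => if V.Ts ≤ M A then V.T else V.F) P := by
  intro r hr
  have hhds := hP r hr
  have hsat := h r hr
  unfold Rule.sat at *
  rw [hhds] at hsat ⊢
  simp only [evalHead] at hsat ⊢
  by_cases hhd : V.Ts ≤ M r.hd
  · simp [hhd]
    cases (evalBody (fun A => if V.Ts ≤ M A then V.T else V.F) r) <;> decide
  · simp only [hhd, if_false]
    have hle : M r.hd ≤ V.Fs := by
      cases hmr : M r.hd <;> simp_all <;> revert hhd <;> decide
    have hb : evalBody M r ≤ V.Fs := hsat.trans hle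
    unfold evalBody at hb ⊢
    obtain ⟨x, hx, hxle⟩ := foldr_min_le (by decide) hb
    rw [List.mem_append] at hx
    rcases hx with hx | hx
    · obtain ⟨a, ha, rfl⟩ := List.mem_map.mp hx
      have : ¬ V.Ts ≤ M a := by
        intro hc; exact absurd (hc.trans hxle) (by decide)
      have hmem : (V.F : V) ∈ (r.pos.map (fun A => if V.Ts ≤ M A then V.T else V.F)
          ++ r.neg.map (fun b => evalNot (if V.Ts ≤ M b then V.T else V.F))) := by
        rw [List.mem_append]
        exact Or.inl (List.mem_map.mpr ⟨a, ha, by simp [this]⟩)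
      calc _ ≤ (V.F : V) := foldr_min_le_mem hmem
        _ ≤ _ := by cases M r.hd <;> decide
    · obtain ⟨b, hbm, rfl⟩ := List.mem_map.mp hx
      have hTs : V.Ts ≤ M b := by
        by_contra hc
        have : evalNot (M b) = V.T := by
          unfold evalNot
          have : M b ≤ V.Fs := by cases hmb : M b <;> simp_all <;> revert hc <;> decide
          simp [this]
        rw [this] at hxle; exact absurd hxle (by decide)
      have hmem : (V.F : V) ∈ (r.pos.map (fun A => if V.Ts ≤ M A then V.T else V.F)
          ++ r.neg.map (fun b => evalNot (if V.Ts ≤ M b then V.T else V.F))) := by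
        rw [List.mem_append]
        exact Or.inr (List.mem_map.mpr ⟨b, hbm, by simp [hTs, evalNot]; decide⟩)
      calc _ ≤ (V.F : V) := foldr_min_le_mem hmem
        _ ≤ _ := by cases M r.hd <;> decide
end

section
/- Let S be a finite set of atoms and for each A ∈ S let t_A and f_A be atoms (all distinct from each other and from the atoms in S). Every model N of the program {A × t_A ← : A ∈ S} ∪ {f_A ← (not f_A) ∧ A : A ∈ S} satisfies N(A) ≠ F and N(f_A) ≠ F for every A ∈ S. -/
theorem V.le_T (v : V) : v ≤ V.T := by
  cases v <;> decide

theorem evalHead_of_ne_Fs {I : ℕ → V} {c : ℕ} (cs : List ℕ) (hc : I c ≠ V.Fs) :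
    evalHead I c cs = I c := by
  cases cs with
  | nil => rfl
  | cons c' cs => exact if_neg hc

theorem evalBody_pos_nil_neg_nil (I : ℕ → V) (c : ℕ) (cs : List ℕ) :
    evalBody I ⟨c, cs, [], []⟩ = V.T := rfl

theorem Rule.sat_fact_iff {I : ℕ → V} {c : ℕ} {cs : List ℕ} :
    (Rule.mk c cs [] []).sat I ↔ evalHead I c cs = V.T := by
  rw [Rule.sat, evalBody_pos_nil_neg_nil]
  exact ⟨(V.le_T _).antisymm, ge_of_eq⟩

theorem ne_F_of_sat_fact {I : ℕ → V} {c : ℕ} {cs : List ℕ}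
    (h : (Rule.mk c cs [] []).sat I) : I c ≠ V.F := by
  intro hF
  rw [Rule.sat_fact_iff, evalHead_of_ne_Fs cs (by simp [hF]), hF] at h
  exact V.noConfusion h

theorem evalBody_pos_single_neg_single (I : ℕ → V) (c a b : ℕ) :
    evalBody I ⟨c, [], [a], [b]⟩ = min (I a) (evalNot (I b)) := by
  simp [evalBody, min_eq_left (V.le_T _)]

theorem ne_F_of_sat_of_ne_F_of_neg_self {I : ℕ → V} {c a : ℕ}
    (h : (Rule.mk c [] [a] [c]).sat I) (ha : I a ≠ V.F) : I c ≠ V.F := by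
  intro hF
  rw [Rule.sat, evalBody_pos_single_neg_single, show evalHead I c [] = I c from rfl, hF] at h
  revert h ha
  cases I a <;> decide

theorem property_P1_general (S : Finset ℕ) (t f : ℕ → ℕ)
    (N : ℕ → V)
    (hN : isModel N
      ((S.image fun A => Rule.mk A [t A] [] []) ∪
       (S.image fun A => Rule.mk (f A) [] [A] [f A]))) :
    ∀ A ∈ S, N A ≠ V.F ∧ N (f A) ≠ V.F := by
  intro A hA
  have hA_ne : N A ≠ V.F :=
    ne_F_of_sat_fact (hN _ (Finset.mem_union_left _ (Finset.mem_image_of_mem _ hA)))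
  exact ⟨hA_ne, ne_F_of_sat_of_ne_F_of_neg_self
    (hN _ (Finset.mem_union_right _ (Finset.mem_image_of_mem _ hA))) hA_ne⟩

/-- every model `N` of
`{A × t_A ← : A ∈ S} ∪ {f_A ← not f_A ∧ A : A ∈ S}`
satisfies `N(A) ≠ F` and `N(f_A) ≠ F` for every `A ∈ S`. -/
theorem property_P1 (S : Finset ℕ) (t f : ℕ → ℕ)
    (htS : ∀ A ∈ S, t A ∉ S) (hfS : ∀ A ∈ S, f A ∉ S)
    (htinj : ∀ A ∈ S, ∀ B ∈ S, t A = t B → A = B)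
    (hfinj : ∀ A ∈ S, ∀ B ∈ S, f A = f B → A = B)
    (htf : ∀ A ∈ S, ∀ B ∈ S, t A ≠ f B)
    (N : ℕ → V)
    (hN : isModel N
      ((S.image fun A => Rule.mk A [t A] [] []) ∪
       (S.image fun A => Rule.mk (f A) [] [A] [f A]))) :
    ∀ A ∈ S, N A ≠ V.F ∧ N (f A) ≠ V.F :=
  property_P1_general S t f N hN
end
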